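/- Define b(t,x) = −σ tanh(σ(T−t)) x − σc/cosh(σ(T−t)) and let p(t,x) be the Gaussian density with mean −c e^{−σ(T−t)} and variance σ/(1+tanh(σ(T−t))). Then the time-reversed drift b^r(t,x) = −b(T−t,x) + σ² ∂_x log p(T−t,x) equals −σx for all 0 ≤ t ≤ T and x ∈ ℝ. -/

import Mathlib

/-!
With `u = σ t`, the density `p (T - t)` is Gaussian with mean `-c e^{-u}` and variance
`σ / (1 + tanh u)`, so `σ² ∂ₓ log p = -σ (x + c e^{-u}) (1 + tanh u)`. Since
`1 + tanh u = e^u / cosh u`, this equals `-σ x (1 + tanh u) - σ c / cosh u`, and adding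
`-b(t, x) = σ x tanh u + σ c / cosh u` leaves `-σ x`.
-/

open Real

lemma deriv_log_mul_exp_neg_sq_div {A : ℝ} (hA : A ≠ 0) (m v x : ℝ) :
    deriv (fun y => log (A * exp (-(y + m) ^ 2 / (2 * v)))) x = -(x + m) / v := by
  have hlog : (fun y => log (A * exp (-(y + m) ^ 2 / (2 * v))))
      = fun y => log A + -(y + m) ^ 2 / (2 * v) := by
    funext y
    rw [log_mul hA (exp_ne_zero _), log_exp]
  have hsq : HasDerivAt (fun y : ℝ => (y + m) ^ 2) (2 * (x + m)) x := by
    simpa using ((hasDerivAt_id x).add_const m).fun_pow 2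
  have hder : HasDerivAt (fun y => log A + -(y + m) ^ 2 / (2 * v)) (-(2 * (x + m)) / (2 * v)) x :=
    (hsq.neg.div_const (2 * v)).const_add (log A)
  rw [hlog, hder.deriv]
  by_cases hv : v = 0
  · simp [hv] -- both sides are `0` since `x / 0 = 0`
  · field_simp

lemma one_add_tanh_pos (u : ℝ) : 0 < 1 + tanh u := by
  linarith [neg_one_lt_tanh u]

lemma exp_neg_mul_one_add_tanh (u : ℝ) : exp (-u) * (1 + tanh u) = (cosh u)⁻¹ := by
  have hcosh : cosh u ≠ 0 := (cosh_pos u).ne'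
  rw [tanh_eq_sinh_div_cosh, one_add_div hcosh, cosh_add_sinh, ← mul_div_assoc,
    ← exp_add, neg_add_cancel, exp_zero, one_div]

theorem reversed_drift_is_OU_general (σ c T : ℝ) (hσ : 0 < σ)
    (b : ℝ → ℝ → ℝ)
    (hb : ∀ t x, b t x =
      -σ * Real.tanh (σ * (T - t)) * x - σ * c / Real.cosh (σ * (T - t)))
    (p : ℝ → ℝ → ℝ)
    (hp : ∀ t x, p t x =
      (1 / Real.sqrt (2 * π * (σ / (1 + Real.tanh (σ * (T - t)))))) *
        Real.exp (-(x + c * Real.exp (-σ * (T - t))) ^ 2 /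
          (2 * (σ / (1 + Real.tanh (σ * (T - t)))))) ) :
    ∀ t x : ℝ, 0 ≤ t → t ≤ T →
      -b (T - t) x + σ ^ 2 * deriv (fun y => Real.log (p (T - t) y)) x = -σ * x := by
  intro t x _ _
  have htanh := one_add_tanh_pos (σ * t)
  have hnorm : 1 / √(2 * π * (σ / (1 + tanh (σ * t)))) ≠ 0 := by positivity
  simp only [hb, hp, sub_sub_cancel]
  rw [deriv_log_mul_exp_neg_sq_div hnorm, div_eq_mul_inv (σ * c), ← exp_neg_mul_one_add_tanh]
  field_simp
  ring

theorem reversed_drift_is_OU (σ c T : ℝ) (hσ : 0 < σ) (hT : 0 < T)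
    (b : ℝ → ℝ → ℝ)
    (hb : ∀ t x, b t x =
      -σ * Real.tanh (σ * (T - t)) * x - σ * c / Real.cosh (σ * (T - t)))
    (p : ℝ → ℝ → ℝ)
    (hp : ∀ t x, p t x =
      (1 / Real.sqrt (2 * π * (σ / (1 + Real.tanh (σ * (T - t)))))) *
        Real.exp (-(x + c * Real.exp (-σ * (T - t))) ^ 2 /
          (2 * (σ / (1 + Real.tanh (σ * (T - t)))))) ) :
    ∀ t x : ℝ, 0 ≤ t → t ≤ T →
      -b (T - t) x + σ ^ 2 * deriv (fun y => Real.log (p (T - t) y)) x = -σ * x :=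
  reversed_drift_is_OU_general σ c T hσ b hb p hp
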